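/- arXiv:cs/0609109 — 6 statements merged into one kernel-verified Lean document; each statement's English description precedes it below -/
import Mathlib

section
/- Consider the algebra on the natural numbers N with the successor function succ and the predecessor function pred (where pred(0)=0 and pred(n+1)=n). The only subsets of N recognizable in this algebra are N itself and the empty set; equivalently, the only equivalence relations on N stable under both succ and pred and of finite index are: if some n is equivalent to n+p with p>0, then all natural numbers are equivalent. -/
/-- An equivalence-candidate relation on ℕ is stable under successor and
(truncated) predecessor. -/
def SuccPredStable (r : ℕ → ℕ → Prop) : Prop :=
  (∀ x y, r x y → r (x + 1) (y + 1)) ∧ (∀ x y, r x y → r (x - 1) (y - 1))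

/-- In the algebra ⟨ℕ, succ, pred⟩, the only recognizable subsets are ∅ and ℕ:
any set saturated by a finite-index equivalence relation stable under succ and
pred is trivial. -/
theorem recognizable_succ_pred_trivial (L : Set ℕ)
    (h : ∃ r : ℕ → ℕ → Prop, Equivalence r ∧ SuccPredStable r ∧
      Finite (Quot r) ∧ ∀ x y, r x y → (x ∈ L ↔ y ∈ L)) :
    L = ∅ ∨ L = Set.univ := by
  obtain ⟨r, heq, ⟨hsucc, hpred⟩, hfin, hsat⟩ := h
  -- pigeonhole: two distinct naturals related
  obtain ⟨a, b, hab, hmk⟩ := Finite.exists_ne_map_eq_of_infinite (Quot.mk r)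
  have hrab : r a b := (heq.eqvGen_iff).mp (Quot.eq.mp hmk)
  -- get r 0 p with p > 0
  have key : ∀ k x y, r x y → r (x - k) (y - k) := by
    intro k
    induction k with
    | zero => simpa using fun x y h => h
    | succ n ih =>
      intro x y hxy
      have := hpred _ _ (ih x y hxy)
      simpa [Nat.sub_sub] using this
  have succk : ∀ k x y, r x y → r (x + k) (y + k) := by
    intro k
    induction k with
    | zero => simpa using fun x y h => h
    | succ n ih =>
      intro x y hxy
      have := hsucc _ _ (ih x y hxy)
      simpa [Nat.add_assoc] using this
  have hr0p : ∃ p, 0 < p ∧ r 0 p := by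
    rcases Nat.lt_or_ge a b with hlt | hge
    · refine ⟨b - a, Nat.sub_pos_of_lt hlt, ?_⟩
      have := key a a b hrab
      simpa [Nat.sub_self] using this
    · have hlt : b < a := lt_of_le_of_ne hge (Ne.symm hab)
      refine ⟨a - b, Nat.sub_pos_of_lt hlt, ?_⟩
      have := key b b a (heq.symm hrab)
      simpa [Nat.sub_self] using this
  obtain ⟨p, hp, hr0⟩ := hr0p
  -- all naturals related to 0
  have hall : ∀ x, r 0 x := by
    intro x
    induction x using Nat.strong_induction_on with
    | _ x ih =>
      rcases Nat.lt_or_ge x p with hlt | hge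
      · -- x < p : apply pred (p - x) times to r 0 p
        have := key (p - x) 0 p hr0
        have hx : p - (p - x) = x := Nat.sub_sub_self (le_of_lt hlt)
        simpa [Nat.zero_sub, hx] using this
      · -- x ≥ p : x = (x - p) + p
        have h1 : r (x - p) x := by
          have := succk (x - p) 0 p hr0
          rw [Nat.zero_add, Nat.add_comm] at this; rwa [Nat.sub_add_cancel hge] at this
        exact heq.trans (ih (x - p) (Nat.sub_lt_of_pos_le hp hge)) h1
  by_cases h0 : (0 : ℕ) ∈ L
  · right
    ext x
    simp only [Set.mem_univ, iff_true]
    exact (hsat 0 x (hall x)).mp h0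
  · left
    ext x
    simp only [Set.mem_empty_iff_false, iff_false]
    exact fun hx => h0 ((hsat 0 x (hall x)).mpr hx)
end

section
/- On the free monoid {a,b}* enriched with the circular shift operation sh (sh(1)=1, sh(au)=ua, sh(bu)=ub), the language a*b is not recognizable: there is no finite-index equivalence relation on {a,b}* saturating a*b that is stable under concatenation (on both sides) and under sh. -/
/-- The circular shift on words over a two-letter alphabet (letters = Bool,
`true` = a, `false` = b): sh(ε) = ε and sh(cu) = uc. -/
def sh : List Bool → List Bool
  | [] => []
  | c :: u => u ++ [c]

/-- The language a*b = { aⁿb : n ≥ 0 }. -/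
def LangAStarB : Set (List Bool) :=
  { w | ∃ n : ℕ, w = List.replicate n true ++ [false] }

lemma sh_iterate (u v : List Bool) : sh^[u.length] (u ++ v) = v ++ u := by
  induction u generalizing v with
  | nil => simp
  | cons c u ih =>
    rw [List.length_cons, Function.iterate_succ_apply]
    show sh^[u.length] (sh (c :: (u ++ v))) = v ++ c :: u
    rw [show sh (c :: (u ++ v)) = u ++ (v ++ [c]) by simp [sh], ih]
    simp

lemma mem_lang_getLast? {w : List Bool} (h : w ∈ LangAStarB) :
    w.getLast? = some false := by
  obtain ⟨n, rfl⟩ := h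
  simp

/-- In the free monoid {a,b}* enriched with the circular shift, the language
a*b is not recognizable: no finite-index equivalence relation saturating a*b
is stable under (two-sided) concatenation and under sh. -/
theorem aStarB_not_recognizable_with_shift :
    ¬ ∃ r : List Bool → List Bool → Prop,
      Equivalence r ∧
      Finite (Quot r) ∧
      (∀ u v w : List Bool, r u v → r (w ++ u) (w ++ v)) ∧
      (∀ u v w : List Bool, r u v → r (u ++ w) (v ++ w)) ∧
      (∀ u v : List Bool, r u v → r (sh u) (sh v)) ∧
      (∀ u v : List Bool, r u v → (u ∈ LangAStarB ↔ v ∈ LangAStarB)) := by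
  rintro ⟨r, hequiv, hfin, _, _, hsh, hsat⟩
  -- pigeonhole on n ↦ [aⁿb]
  obtain ⟨m, n, hmn, heq⟩ := Finite.exists_ne_map_eq_of_infinite
    (fun n : ℕ => Quot.mk r (List.replicate n true ++ [false]))
  -- wlog m < n
  wlog hlt : m < n generalizing m n
  · exact this n m hmn.symm heq.symm (by omega)
  have hr : r (List.replicate m true ++ [false]) (List.replicate n true ++ [false]) := by
    have := Quot.eq.mp heq
    exact (hequiv.eqvGen_iff).mp this
  -- iterate sh (m+1) times
  have hiter : ∀ k u v, r u v → r (sh^[k] u) (sh^[k] v) := by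
    intro k
    induction k with
    | zero => intro u v h; exact h
    | succ k ih =>
      intro u v h
      rw [Function.iterate_succ_apply, Function.iterate_succ_apply]
      exact ih _ _ (hsh _ _ h)
  have hr2 := hiter (m + 1) _ _ hr
  have e1 : sh^[m + 1] (List.replicate m true ++ [false])
      = List.replicate m true ++ [false] := by
    have := sh_iterate (List.replicate m true ++ [false]) []
    simpa using this
  have e2 : sh^[m + 1] (List.replicate n true ++ [false])
      = (List.replicate (n - (m + 1)) true ++ [false]) ++ List.replicate (m + 1) true := by
    have hsplit : List.replicate n true ++ [false]
        = List.replicate (m + 1) true ++ (List.replicate (n - (m + 1)) true ++ [false]) := by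
      conv_lhs => rw [show n = (m + 1) + (n - (m + 1)) by omega]
      rw [List.replicate_add, List.append_assoc]
    rw [hsplit]
    have := sh_iterate (List.replicate (m + 1) true)
      (List.replicate (n - (m + 1)) true ++ [false])
    simpa using this
  rw [e1, e2] at hr2
  have hmem : (List.replicate m true ++ [false]) ∈ LangAStarB := ⟨m, rfl⟩
  have hmem2 := (hsat _ _ hr2).mp hmem
  have := mem_lang_getLast? hmem2
  simp [List.replicate_succ', List.getLast?_append, ← List.append_assoc] at this
end

section
/- (Transfer of congruences.) Let S be an F-algebra, T a G-algebra, and H a family of mappings H_{t,s} from T_t to S_s such that for each operation g in G of type (t_1,...,t_r) -> t and each h in H_{t,s}, there exist sorts s_1,...,s_r, mappings h_i in H_{t_i,s_i}, and an F-derived operation f of type (s_1,...,s_r) -> s with h(g(x_1,...,x_r)) = f(h_1(x_1),...,h_r(x_r)) for all x_i. If ≡ is an F-congruence on S, then the relation ≈ on T defined by x ≈ y iff h(x) ≡ h(y) for all h in the relevant H_{t,s}, is a G-congruence on T. -/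
universe u v

/-- A many-sorted signature over a set `S` of sorts. -/
structure Signature (S : Type u) where
  Op : Type u
  arity : Op → List S
  sort : Op → S

/-- An algebra over a many-sorted signature. -/
structure MSAlgebra {S : Type u} (F : Signature S) where
  carrier : S → Type v
  interp : ∀ f : F.Op,
    (∀ i : Fin (F.arity f).length, carrier ((F.arity f).get i)) →
      carrier (F.sort f)

/-- `rel` is a congruence on `M`. -/
def IsCongruence {S : Type u} {F : Signature S} (M : MSAlgebra.{u, v} F)
    (rel : ∀ s, M.carrier s → M.carrier s → Prop) : Prop :=
  (∀ s, Equivalence (rel s)) ∧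
  ∀ (f : F.Op) (a b : ∀ i : Fin (F.arity f).length, M.carrier ((F.arity f).get i)),
    (∀ i, rel _ (a i) (b i)) → rel _ (M.interp f a) (M.interp f b)

/-- Terms over `F` with variables of sorts `X 0, …, X (r-1)`. -/
inductive TermV {S : Type u} (F : Signature S) {r : ℕ} (X : Fin r → S) : S → Type u
  | var (i : Fin r) : TermV F X (X i)
  | op (f : F.Op)
      (args : ∀ i : Fin (F.arity f).length, TermV F X ((F.arity f).get i)) :
      TermV F X (F.sort f)

/-- Evaluation of a term with variables, given values for the variables. -/
def evalV {S : Type u} {F : Signature S} (M : MSAlgebra.{u, v} F) {r : ℕ}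
    {X : Fin r → S} (v : ∀ i, M.carrier (X i)) :
    ∀ {s : S}, TermV F X s → M.carrier s
  | _, .var i => v i
  | _, .op f args => M.interp f fun i => evalV M v (args i)

/-- `φ` is a derived operation of the algebra `M`, of type
`(X 0, …, X (r-1)) → s`: it is defined by a term with variables. -/
def IsDerived {S : Type u} {F : Signature S} (M : MSAlgebra.{u, v} F) {r : ℕ}
    (X : Fin r → S) (s : S) (φ : (∀ i, M.carrier (X i)) → M.carrier s) : Prop :=
  ∃ t : TermV F X s, ∀ v, φ v = evalV M v t

theorem evalV_congr {S : Type u} {F : Signature S} (M : MSAlgebra.{u, v} F)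
    (eqv : ∀ s, M.carrier s → M.carrier s → Prop) (heqv : IsCongruence M eqv)
    {r : ℕ} {X : Fin r → S} (v w : ∀ i, M.carrier (X i))
    (hvw : ∀ i, eqv _ (v i) (w i)) :
    ∀ {s : S} (t : TermV F X s), eqv s (evalV M v t) (evalV M w t)
  | _, .var i => hvw i
  | _, .op f args => heqv.2 f _ _ fun i => evalV_congr M eqv heqv v w hvw (args i)

/-- Transfer of congruences.  Let `SA` be an `F`-algebra, `TA` a `G`-algebra
and `H` a family of mappings from the domains of `TA` to those of `SA` such
that for every `G`-operation `g` and every `h ∈ H`, `h ∘ g` factors through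
an `F`-derived operation applied to members of `H`.  If `eqv` is an
`F`-congruence on `SA`, then the relation `x ≈ y ↔ ∀ h ∈ H, h x ≡ h y`
is a `G`-congruence on `TA`. -/
theorem congruence_transfer
    {SS : Type u} {TT : Type u} (F : Signature SS) (G : Signature TT)
    (SA : MSAlgebra.{u, v} F) (TA : MSAlgebra.{u, v} G)
    (H : ∀ (t : TT) (s : SS), Set (TA.carrier t → SA.carrier s))
    (hH : ∀ (g : G.Op) (s : SS) (h : TA.carrier (G.sort g) → SA.carrier s),
      h ∈ H (G.sort g) s →
      ∃ (σ : Fin (G.arity g).length → SS)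
        (hi : ∀ i : Fin (G.arity g).length,
          TA.carrier ((G.arity g).get i) → SA.carrier (σ i)),
        (∀ i, hi i ∈ H ((G.arity g).get i) (σ i)) ∧
        ∃ φ : (∀ i, SA.carrier (σ i)) → SA.carrier s,
          IsDerived SA σ s φ ∧
          ∀ x : ∀ i : Fin (G.arity g).length, TA.carrier ((G.arity g).get i),
            h (TA.interp g x) = φ fun i => hi i (x i))
    (eqv : ∀ s, SA.carrier s → SA.carrier s → Prop)
    (heqv : IsCongruence SA eqv) :
    IsCongruence TA (fun t a b =>
      ∀ (s : SS) (h : TA.carrier t → SA.carrier s), h ∈ H t s →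
        eqv s (h a) (h b)) := by
  constructor
  · intro t
    exact ⟨fun a s h hh => (heqv.1 s).refl _,
      fun ha s h hh => (heqv.1 s).symm (ha s h hh),
      fun ha hb s h hh => (heqv.1 s).trans (ha s h hh) (hb s h hh)⟩
  · intro g a b hab s h hh
    obtain ⟨σ, hi, hiH, φ, ⟨t, ht⟩, hfac⟩ := hH g s h hh
    rw [hfac a, hfac b, ht, ht]
    exact evalV_congr SA eqv heqv _ _ (fun i => hab i _ _ (hiH i)) t
end

section
/- The type equivalence ζ (relating two (R,C)-structures when their restrictions to the sources are isomorphic) is a locally finite congruence on the algebra of relational structures with sources: it is compatible with disjoint union ⊕ and with every quantifier-free definable unary operation, and for each sort (R,C) the number of types is at most card(C)! · ∏_{r∈R} 2^{card(C)^{ρ(r)}}. -/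
/-- A relational structure over the relation symbols `R` (with arities `ρ`)
and the constant (source-label) symbols `C`. -/
structure Struc (R : Type) (ρ : R → ℕ) (C : Type) : Type 1 where
  dom : Type
  rel : ∀ r : R, (Fin (ρ r) → dom) → Prop
  const : C → dom

/-- Quantifier-free first-order formulas over `(R, C)` with free variables
among `x₀, …, x_{n-1}` (Boolean combinations of atomic formulas). -/
inductive QF (R : Type) (ρ : R → ℕ) (C : Type) (n : ℕ) : Type
  | tru : QF R ρ C n
  | eq (s t : C ⊕ Fin n) : QF R ρ C n
  | rel (r : R) (args : Fin (ρ r) → C ⊕ Fin n) : QF R ρ C n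
  | not (φ : QF R ρ C n) : QF R ρ C n
  | and (φ ψ : QF R ρ C n) : QF R ρ C n

/-- Value of a term (a constant or a variable) under an assignment. -/
def Struc.val {R : Type} {ρ : R → ℕ} {C : Type} (S : Struc R ρ C) {n : ℕ}
    (v : Fin n → S.dom) : C ⊕ Fin n → S.dom
  | Sum.inl c => S.const c
  | Sum.inr i => v i

/-- Satisfaction of a quantifier-free formula in a structure, under an
assignment of the free variables. -/
def Struc.Sat {R : Type} {ρ : R → ℕ} {C : Type} (S : Struc R ρ C) {n : ℕ}
    (v : Fin n → S.dom) : QF R ρ C n → Prop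
  | .tru => True
  | .eq s t => S.val v s = S.val v t
  | .rel r args => S.rel r fun i => S.val v (args i)
  | .not φ => ¬ S.Sat v φ
  | .and φ ψ => S.Sat v φ ∧ S.Sat v ψ

/-- A quantifier-free operation scheme from `(R, C)`-structures to
`(R', C')`-structures: a domain formula, a formula for each relation of `R'`,
and a formula `κ c d` for each pair of constants. -/
structure Scheme (R : Type) (ρ : R → ℕ) (C : Type)
    (R' : Type) (ρ' : R' → ℕ) (C' : Type) : Type where
  δ : QF R ρ C 1
  frm : ∀ r' : R', QF R ρ C (ρ' r')
  κ : C → C' → QF R ρ C 0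

/-- The validity conditions a qfd operation scheme has to satisfy (in every
`(R, C)`-structure): each new constant is defined uniquely by some old
constant, lies in the new domain, and the new relations only relate elements
of the new domain. -/
structure Scheme.IsValid {R : Type} {ρ : R → ℕ} {C : Type}
    {R' : Type} {ρ' : R' → ℕ} {C' : Type} (D : Scheme R ρ C R' ρ' C') : Prop where
  uniq : ∀ (S : Struc R ρ C) (c c' : C) (d : C'),
    S.Sat (fun i => i.elim0) (D.κ c d) → S.Sat (fun i => i.elim0) (D.κ c' d) →
      S.const c = S.const c'
  total : ∀ (S : Struc R ρ C) (d : C'), ∃ c : C, S.Sat (fun i => i.elim0) (D.κ c d)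
  constDom : ∀ (S : Struc R ρ C) (c : C) (d : C'),
    S.Sat (fun i => i.elim0) (D.κ c d) → S.Sat (fun _ : Fin 1 => S.const c) D.δ
  relDom : ∀ (S : Struc R ρ C) (r' : R') (v : Fin (ρ' r') → S.dom),
    S.Sat v (D.frm r') → ∀ i, S.Sat (fun _ : Fin 1 => v i) D.δ

/-- The quantifier-free definable operation defined by a (valid) qfd
operation scheme. -/
noncomputable def Scheme.apply {R : Type} {ρ : R → ℕ} {C : Type}
    {R' : Type} {ρ' : R' → ℕ} {C' : Type} (D : Scheme R ρ C R' ρ' C')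
    (hD : D.IsValid) (S : Struc R ρ C) : Struc R' ρ' C' where
  dom := { x : S.dom // S.Sat (fun _ : Fin 1 => x) D.δ }
  rel r' args := S.Sat (fun i => (args i).1) (D.frm r')
  const d := ⟨S.const (Classical.choose (hD.total S d)),
    hD.constDom S _ d (Classical.choose_spec (hD.total S d))⟩

/-- Isomorphism of `(R, C)`-structures. -/
structure Iso {R : Type} {ρ : R → ℕ} {C : Type} (S T : Struc R ρ C) where
  e : S.dom ≃ T.dom
  map_rel : ∀ (r : R) (args : Fin (ρ r) → S.dom),
    S.rel r args ↔ T.rel r fun i => e (args i)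
  map_const : ∀ c : C, e (S.const c) = T.const c

/-- The type of a structure: its restriction to the set of values of the
constants (the sources). -/
def Struc.typeOf {R : Type} {ρ : R → ℕ} {C : Type} (S : Struc R ρ C) :
    Struc R ρ C where
  dom := { x : S.dom // ∃ c : C, S.const c = x }
  rel r args := S.rel r fun i => (args i).1
  const c := ⟨S.const c, c, rfl⟩

/-- Two structures of the same sort are type-equivalent when their types are
isomorphic. -/
def TypeEquiv {R : Type} {ρ : R → ℕ} {C : Type} (S T : Struc R ρ C) : Prop :=
  Nonempty (Iso S.typeOf T.typeOf)

/-- Relations of the disjoint union of two structures. -/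
def oplusRel {R : Type} {ρ : R → ℕ} {C : Type} {R' : Type} {ρ' : R' → ℕ}
    {C' : Type} (S : Struc R ρ C) (S' : Struc R' ρ' C') :
    ∀ r : R ⊕ R', (Fin (Sum.elim ρ ρ' r) → S.dom ⊕ S'.dom) → Prop
  | Sum.inl r => fun args =>
      ∃ a : Fin (ρ r) → S.dom, (∀ i, args i = Sum.inl (a i)) ∧ S.rel r a
  | Sum.inr r => fun args =>
      ∃ a : Fin (ρ' r) → S'.dom, (∀ i, args i = Sum.inr (a i)) ∧ S'.rel r a

/-- The disjoint union of an `(R, C)`-structure and an `(R', C')`-structure,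
an `(R ∪ R', C ∪ C')`-structure (the constant sets being disjoint). -/
def Struc.oplus {R : Type} {ρ : R → ℕ} {C : Type} {R' : Type} {ρ' : R' → ℕ}
    {C' : Type} (S : Struc R ρ C) (S' : Struc R' ρ' C') :
    Struc (R ⊕ R') (Sum.elim ρ ρ') (C ⊕ C') where
  dom := S.dom ⊕ S'.dom
  rel := oplusRel S S'
  const := Sum.elim (fun c => Sum.inl (S.const c)) (fun c => Sum.inr (S'.const c))


section AuxLemmas

variable {R : Type} {ρ : R → ℕ} {C : Type}

/-- Transfer of satisfaction of quantifier-free formulas along an isomorphism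
of types, for assignments taking values among the sources. -/
lemma sat_transfer {S T : Struc R ρ C} (I : Iso S.typeOf T.typeOf)
    {n : ℕ} (v : Fin n → S.typeOf.dom) (φ : QF R ρ C n) :
    S.Sat (fun i => (v i).1) φ ↔ T.Sat (fun i => (I.e (v i)).1) φ := by
  have hval : ∀ t : C ⊕ Fin n,
      S.val (fun i => (v i).1) t = (Sum.elim S.typeOf.const v t).1 := by
    rintro (c | i) <;> rfl
  have hvalT : ∀ t : C ⊕ Fin n,
      T.val (fun i => (I.e (v i)).1) t = (I.e (Sum.elim S.typeOf.const v t)).1 := by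
    rintro (c | i)
    · show T.const c = _
      rw [show Sum.elim S.typeOf.const v (Sum.inl c) = S.typeOf.const c from rfl,
        I.map_const c]
      rfl
    · rfl
  induction φ with
  | tru => exact Iff.rfl
  | eq s t =>
      show S.val _ s = S.val _ t ↔ T.val _ s = T.val _ t
      rw [hval, hval, hvalT, hvalT]
      constructor
      · intro h
        exact congrArg Subtype.val (congrArg I.e (Subtype.ext h))
      · intro h
        exact congrArg Subtype.val (I.e.injective (Subtype.ext h))
  | rel r args =>
      show S.rel r _ ↔ T.rel r _
      simp only [hval, hvalT]
      exact I.map_rel r _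
  | not ψ ih => exact not_congr ih
  | and ψ χ ih1 ih2 => exact and_congr ih1 ih2

lemma sat_transfer' {S T : Struc R ρ C} (I : Iso S.typeOf T.typeOf)
    {n : ℕ} (v : Fin n → S.typeOf.dom) (vs : Fin n → S.dom) (vt : Fin n → T.dom)
    (hs : vs = fun i => (v i).1) (ht : vt = fun i => (I.e (v i)).1)
    (φ : QF R ρ C n) : S.Sat vs φ ↔ T.Sat vt φ := by
  subst hs; subst ht; exact sat_transfer I v φ

lemma sat_transfer0 {S T : Struc R ρ C} (I : Iso S.typeOf T.typeOf)
    (φ : QF R ρ C 0) :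
    S.Sat (fun i => i.elim0) φ ↔ T.Sat (fun i => i.elim0) φ :=
  sat_transfer' I (fun i => i.elim0) _ _
    (funext fun i => i.elim0) (funext fun i => i.elim0) φ

noncomputable def mkMap (S T : Struc R ρ C) (x : S.typeOf.dom) : T.typeOf.dom :=
  ⟨T.const x.2.choose, x.2.choose, rfl⟩

lemma mkMap_leftInv (S T : Struc R ρ C)
    (hc : ∀ c c' : C, S.const c = S.const c' ↔ T.const c = T.const c') :
    ∀ x, mkMap T S (mkMap S T x) = x := by
  intro x
  apply Subtype.ext
  refine Eq.trans ?_ x.2.choose_spec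
  exact (hc _ _).2 ((mkMap S T x).2.choose_spec)

/-- The invariant characterization of type equivalence. -/
lemma typeEquiv_iff (S T : Struc R ρ C) :
    TypeEquiv S T ↔
      ((∀ c c' : C, S.const c = S.const c' ↔ T.const c = T.const c') ∧
       (∀ (r : R) (t : Fin (ρ r) → C),
         S.rel r (fun i => S.const (t i)) ↔ T.rel r (fun i => T.const (t i)))) := by
  constructor
  · rintro ⟨I⟩
    constructor
    · intro c c'
      have h1 : (S.const c = S.const c') ↔ (S.typeOf.const c = S.typeOf.const c') :=
        ⟨fun h => Subtype.ext h, fun h => congrArg Subtype.val h⟩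
      have h2 : (T.const c = T.const c') ↔ (T.typeOf.const c = T.typeOf.const c') :=
        ⟨fun h => Subtype.ext h, fun h => congrArg Subtype.val h⟩
      rw [h1, h2, ← I.map_const c, ← I.map_const c']
      exact (I.e.injective.eq_iff).symm
    · intro r t
      have h := I.map_rel r (fun i => S.typeOf.const (t i))
      simp only [I.map_const] at h
      exact h
  · rintro ⟨hc, hr⟩
    have hc' : ∀ c c' : C, T.const c = T.const c' ↔ S.const c = S.const c' :=
      fun c c' => (hc c c').symm
    refine ⟨⟨Equiv.mk (mkMap S T) (mkMap T S)
      (mkMap_leftInv S T hc) (mkMap_leftInv T S hc'), ?_, ?_⟩⟩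
    · intro r args
      show S.rel r _ ↔ T.rel r _
      have h1 : (fun i => (args i).1) = fun i => S.const (args i).2.choose :=
        funext fun i => ((args i).2.choose_spec).symm
      rw [h1]
      exact hr r _
    · intro c
      apply Subtype.ext
      show T.const _ = T.const c
      exact (hc _ _).1 ((S.typeOf.const c).2.choose_spec)

end AuxLemmas

section Oplus

variable {R : Type} {ρ : R → ℕ} {C : Type} {R' : Type} {ρ' : R' → ℕ} {C' : Type}

lemma oplus_rel_inl (S : Struc R ρ C) (S' : Struc R' ρ' C') (r : R)
    (t : Fin (ρ r) → C ⊕ C') :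
    (S.oplus S').rel (Sum.inl r) (fun i => (S.oplus S').const (t i)) ↔
      ∃ u : Fin (ρ r) → C, (∀ i, t i = Sum.inl (u i)) ∧
        S.rel r (fun i => S.const (u i)) := by
  constructor
  · rintro ⟨a, ha, hrel⟩
    have hex : ∀ i, ∃ c : C, t i = Sum.inl c := by
      intro i
      rcases h : t i with c | c'
      · exact ⟨c, rfl⟩
      · exfalso
        have := ha i
        simp only [h, Struc.oplus, Sum.elim_inr] at this
        cases this
    choose u hu using hex
    have hau : ∀ i, a i = S.const (u i) := by
      intro i
      have := ha i
      simp only [hu i, Struc.oplus, Sum.elim_inl, Sum.inl.injEq] at this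
      exact this.symm
    refine ⟨u, hu, ?_⟩
    rw [show (fun i => S.const (u i)) = a from funext fun i => (hau i).symm]
    exact hrel
  · rintro ⟨u, hu, hrel⟩
    refine ⟨fun i => S.const (u i), fun i => ?_, hrel⟩
    simp only [hu i, Struc.oplus, Sum.elim_inl]

lemma oplus_rel_inr (S : Struc R ρ C) (S' : Struc R' ρ' C') (r : R')
    (t : Fin (ρ' r) → C ⊕ C') :
    (S.oplus S').rel (Sum.inr r) (fun i => (S.oplus S').const (t i)) ↔
      ∃ u : Fin (ρ' r) → C', (∀ i, t i = Sum.inr (u i)) ∧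
        S'.rel r (fun i => S'.const (u i)) := by
  constructor
  · rintro ⟨a, ha, hrel⟩
    have hex : ∀ i, ∃ c : C', t i = Sum.inr c := by
      intro i
      rcases h : t i with c | c'
      · exfalso
        have := ha i
        simp only [h, Struc.oplus, Sum.elim_inl] at this
        cases this
      · exact ⟨c', rfl⟩
    choose u hu using hex
    have hau : ∀ i, a i = S'.const (u i) := by
      intro i
      have := ha i
      simp only [hu i, Struc.oplus, Sum.elim_inr, Sum.inr.injEq] at this
      exact this.symm
    refine ⟨u, hu, ?_⟩
    rw [show (fun i => S'.const (u i)) = a from funext fun i => (hau i).symm]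
    exact hrel
  · rintro ⟨u, hu, hrel⟩
    refine ⟨fun i => S'.const (u i), fun i => ?_, hrel⟩
    simp only [hu i, Struc.oplus, Sum.elim_inr]

end Oplus


section Card

variable {R : Type} {ρ : R → ℕ} {C : Type} [Fintype C]

open Classical in
/-- The set of indices whose constant coincides with that of `i`. -/
noncomputable def encF (S : Struc R ρ C) (i : Fin (Fintype.card C)) :
    Finset (Fin (Fintype.card C)) :=
  Finset.univ.filter (fun j => S.const ((Fintype.equivFin C).symm j) =
    S.const ((Fintype.equivFin C).symm i))

lemma encF_self (S : Struc R ρ C) (i : Fin (Fintype.card C)) : i ∈ encF S i := by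
  classical
  simp [encF]

/-- The minimal index with the same constant as `i`. -/
noncomputable def encM (S : Struc R ρ C) (i : Fin (Fintype.card C)) :
    Fin (Fintype.card C) :=
  (encF S i).min' ⟨i, encF_self S i⟩

lemma encM_le (S : Struc R ρ C) (i : Fin (Fintype.card C)) : (encM S i : ℕ) ≤ i :=
  Finset.min'_le _ _ (encF_self S i)

lemma encM_const (S : Struc R ρ C) (i : Fin (Fintype.card C)) :
    S.const ((Fintype.equivFin C).symm (encM S i)) =
      S.const ((Fintype.equivFin C).symm i) := by
  classical
  have := Finset.min'_mem (encF S i) ⟨i, encF_self S i⟩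
  exact (Finset.mem_filter.1 this).2

lemma min'_congr {α : Type*} [LinearOrder α] (s t : Finset α)
    (hs : s.Nonempty) (ht : t.Nonempty) (h : s = t) : s.min' hs = t.min' ht := by
  subst h; rfl

lemma encM_eq_iff (S : Struc R ρ C) (i i' : Fin (Fintype.card C)) :
    encM S i = encM S i' ↔
      S.const ((Fintype.equivFin C).symm i) = S.const ((Fintype.equivFin C).symm i') := by
  classical
  constructor
  · intro h
    rw [← encM_const S i, h, encM_const S i']
  · intro h
    have hFF : encF S i = encF S i' := by
      ext j
      simp only [encF, Finset.mem_filter, h]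
    exact min'_congr _ _ _ _ hFF

/-- The encoding of a structure: for each index the minimal index with the
same constant, and for each relation symbol the set of tuples of constants
it relates. -/
noncomputable def enc (S : Struc R ρ C) :
    (∀ i : Fin (Fintype.card C), Fin (i.1 + 1)) ×
      (∀ r : R, (Fin (ρ r) → C) → Prop) :=
  ⟨fun i => ⟨(encM S i).1, Nat.lt_succ_of_le (encM_le S i)⟩,
    fun r t => S.rel r (fun i => S.const (t i))⟩

lemma enc_sound (S T : Struc R ρ C) (h : TypeEquiv S T) : enc S = enc T := by
  classical
  obtain ⟨hc, hr⟩ := (typeEquiv_iff S T).1 h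
  have hmeq : ∀ i, encM S i = encM T i := by
    intro i
    have hFF : encF S i = encF T i := by
      ext j
      simp only [encF, Finset.mem_filter, and_congr_right_iff]
      intro _
      exact hc _ _
    exact min'_congr _ _ _ _ hFF
  refine Prod.ext ?_ ?_
  · funext i
    apply Fin.ext
    show (encM S i : ℕ) = (encM T i : ℕ)
    rw [hmeq i]
  · exact funext fun r => funext fun t => propext (hr r t)

lemma enc_inj (S T : Struc R ρ C) (h : enc S = enc T) : TypeEquiv S T := by
  classical
  have h1 : ∀ i, encM S i = encM T i := by
    intro i
    have h0 := congrFun (congrArg Prod.fst h) i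
    apply Fin.ext
    show ((enc S).1 i : ℕ) = ((enc T).1 i : ℕ)
    exact congrArg Fin.val h0
  have h2 : ∀ (r : R) (t : Fin (ρ r) → C),
      (S.rel r (fun i => S.const (t i))) = (T.rel r (fun i => T.const (t i))) :=
    fun r t => congrFun (congrFun (congrArg Prod.snd h) r) t
  rw [typeEquiv_iff]
  constructor
  · intro c c'
    have e1 := encM_eq_iff S (Fintype.equivFin C c) (Fintype.equivFin C c')
    have e2 := encM_eq_iff T (Fintype.equivFin C c) (Fintype.equivFin C c')
    rw [Equiv.symm_apply_apply, Equiv.symm_apply_apply] at e1 e2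
    rw [← e1, ← e2, h1, h1]
  · intro r t
    exact iff_of_eq (h2 r t)

end Card

/-- The type equivalence is a locally finite congruence on the algebra of
relational structures with sources: it is compatible with disjoint union and
with every quantifier-free definable operation, and for each sort `(R, C)`
the number of types is at most `card C ! · ∏_{r ∈ R} 2 ^ (card C ^ ρ r)`. -/
theorem typeEquiv_locally_finite_congruence :
    (∀ (R : Type) (ρ : R → ℕ) (C : Type) (R' : Type) (ρ' : R' → ℕ) (C' : Type)
        (S₁ S₂ : Struc R ρ C) (S₁' S₂' : Struc R' ρ' C'),
        TypeEquiv S₁ S₂ → TypeEquiv S₁' S₂' →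
        TypeEquiv (S₁.oplus S₁') (S₂.oplus S₂')) ∧
    (∀ (R : Type) (ρ : R → ℕ) (C : Type) (R' : Type) (ρ' : R' → ℕ) (C' : Type)
        (D : Scheme R ρ C R' ρ' C') (hD : D.IsValid) (S T : Struc R ρ C),
        TypeEquiv S T → TypeEquiv (D.apply hD S) (D.apply hD T)) ∧
    (∀ (R : Type) (ρ : R → ℕ) (C : Type) [Fintype R] [Fintype C],
        Finite (Quot (TypeEquiv (R := R) (ρ := ρ) (C := C))) ∧
        Nat.card (Quot (TypeEquiv (R := R) (ρ := ρ) (C := C))) ≤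
          (Fintype.card C).factorial * ∏ r : R, 2 ^ (Fintype.card C ^ ρ r)) := by
  refine ⟨?_, ?_, ?_⟩
  · -- compatibility with ⊕
    intro R ρ C R' ρ' C' S₁ S₂ S₁' S₂' h h'
    obtain ⟨hc1, hr1⟩ := (typeEquiv_iff S₁ S₂).1 h
    obtain ⟨hc2, hr2⟩ := (typeEquiv_iff S₁' S₂').1 h'
    rw [typeEquiv_iff]
    constructor
    · rintro (c | c) (c' | c')
      · simpa [Struc.oplus] using hc1 c c'
      · simp [Struc.oplus]
      · simp [Struc.oplus]
      · simpa [Struc.oplus] using hc2 c c'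
    · rintro (r | r) t
      · exact (oplus_rel_inl S₁ S₁' r t).trans
          ((exists_congr fun u => and_congr Iff.rfl (hr1 r u)).trans
            (oplus_rel_inl S₂ S₂' r t).symm)
      · exact (oplus_rel_inr S₁ S₁' r t).trans
          ((exists_congr fun u => and_congr Iff.rfl (hr2 r u)).trans
            (oplus_rel_inr S₂ S₂' r t).symm)
  · -- compatibility with qfd operations
    intro R ρ C R' ρ' C' D hD S T hST
    obtain ⟨I⟩ := id hST
    obtain ⟨hc, hr⟩ := (typeEquiv_iff S T).1 hST
    have hTsame : ∀ d : C', T.const (Classical.choose (hD.total T d)) =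
        T.const (Classical.choose (hD.total S d)) := by
      intro d
      refine hD.uniq T _ _ d (Classical.choose_spec (hD.total T d)) ?_
      exact (sat_transfer0 I (D.κ _ d)).1 (Classical.choose_spec (hD.total S d))
    rw [typeEquiv_iff]
    constructor
    · intro d d'
      constructor
      · intro hdd
        apply Subtype.ext
        show T.const (Classical.choose (hD.total T d)) =
          T.const (Classical.choose (hD.total T d'))
        rw [hTsame d, hTsame d']
        exact (hc _ _).1 (congrArg Subtype.val hdd)
      · intro hdd
        apply Subtype.ext
        show S.const (Classical.choose (hD.total S d)) =
          S.const (Classical.choose (hD.total S d'))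
        apply (hc _ _).2
        rw [← hTsame d, ← hTsame d']
        exact congrArg Subtype.val hdd
    · intro r' t
      have hfun : (fun i => T.const (Classical.choose (hD.total T (t i)))) =
          (fun i => T.const (Classical.choose (hD.total S (t i)))) :=
        funext fun i => hTsame (t i)
      show S.Sat (fun i => S.const (Classical.choose (hD.total S (t i)))) (D.frm r') ↔
        T.Sat (fun i => T.const (Classical.choose (hD.total T (t i)))) (D.frm r')
      rw [hfun]
      exact sat_transfer' I
        (fun i => S.typeOf.const (Classical.choose (hD.total S (t i)))) _ _ rfl
        (funext fun i => (congrArg Subtype.val (I.map_const _)).symm) (D.frm r')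
  · -- local finiteness
    intro R ρ C _ _
    classical
    have hq : ∀ S T : Struc R ρ C, TypeEquiv S T → enc S = enc T := enc_sound
    let lifted : Quot (TypeEquiv (R := R) (ρ := ρ) (C := C)) →
        (∀ i : Fin (Fintype.card C), Fin (i.1 + 1)) ×
          (∀ r : R, (Fin (ρ r) → C) → Prop) := Quot.lift enc hq
    have hinj : Function.Injective lifted := by
      intro x y
      induction x using Quot.ind with | _ S =>
      induction y using Quot.ind with | _ T =>
      intro hxy
      exact Quot.sound (enc_inj S T hxy)
    constructor
    · exact Finite.of_injective lifted hinj
    · calc Nat.card (Quot (TypeEquiv (R := R) (ρ := ρ) (C := C))) ≤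
          Nat.card ((∀ i : Fin (Fintype.card C), Fin (i.1 + 1)) ×
            (∀ r : R, (Fin (ρ r) → C) → Prop)) :=
            Nat.card_le_card_of_injective lifted hinj
        _ = (Fintype.card C).factorial * ∏ r : R, 2 ^ (Fintype.card C ^ ρ r) := by
            rw [Nat.card_prod, Nat.card_pi, Nat.card_pi]
            have h1 : ∏ i : Fin (Fintype.card C), Nat.card (Fin (i.1 + 1)) =
                (Fintype.card C).factorial := by
              simp only [Nat.card_eq_fintype_card, Fintype.card_fin]
              rw [Fin.prod_univ_eq_prod_range (fun i => i + 1),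
                Finset.prod_range_add_one_eq_factorial]
            have h2 : ∀ r : R, Nat.card ((Fin (ρ r) → C) → Prop) =
                2 ^ (Fintype.card C ^ ρ r) := by
              intro r
              rw [Nat.card_fun, Nat.card_fun]
              simp [Nat.card_eq_fintype_card]
            rw [h1]
            congr 1
            exact Finset.prod_congr rfl fun r _ => h2 r
end

section
/- For each sort (R,C), the set of source-separated structures (those S in which c_S ≠ c'_S for all distinct constants c, c' in C) is a recognizable subset of the set of all (R,C)-structures, with respect to the signature consisting of disjoint union and all quantifier-free definable operations. -/
/-! ### Auxiliary development for the proof -/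

/-- Two structures are related when their constants realize the same atomic
equalities and relations. -/
def MyRel (R : Type) (ρ : R → ℕ) (C : Type) (S T : Struc R ρ C) : Prop :=
  (∀ c c' : C, S.const c = S.const c' ↔ T.const c = T.const c') ∧
  (∀ (r : R) (args : Fin (ρ r) → C),
    (S.rel r fun i => S.const (args i)) ↔ (T.rel r fun i => T.const (args i)))

theorem myRel_equiv (R : Type) (ρ : R → ℕ) (C : Type) :
    Equivalence (MyRel R ρ C) := by
  constructor
  · exact fun S => ⟨fun _ _ => Iff.rfl, fun _ _ => Iff.rfl⟩
  · exact fun h => ⟨fun c c' => (h.1 c c').symm, fun r a => (h.2 r a).symm⟩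
  · exact fun h h' => ⟨fun c c' => (h.1 c c').trans (h'.1 c c'),
      fun r a => (h.2 r a).trans (h'.2 r a)⟩

/-- Substitute constants for the free variables of a term. -/
def substTerm {C : Type} {n : ℕ} (f : Fin n → C) : C ⊕ Fin n → C ⊕ Fin 0 :=
  Sum.elim Sum.inl (fun i => Sum.inl (f i))

/-- Substitute constants for the free variables of a formula. -/
def QF.subst {R : Type} {ρ : R → ℕ} {C : Type} {n : ℕ} (f : Fin n → C) :
    QF R ρ C n → QF R ρ C 0
  | .tru => .tru
  | .eq s t => .eq (substTerm f s) (substTerm f t)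
  | .rel r args => .rel r fun i => substTerm f (args i)
  | .not φ => .not (φ.subst f)
  | .and φ ψ => .and (φ.subst f) (ψ.subst f)

theorem val_substTerm {R : Type} {ρ : R → ℕ} {C : Type} (S : Struc R ρ C)
    {n : ℕ} (f : Fin n → C) (s : C ⊕ Fin n) :
    S.val (fun i : Fin 0 => i.elim0) (substTerm f s) =
      S.val (fun i => S.const (f i)) s := by
  cases s <;> rfl

theorem sat_subst {R : Type} {ρ : R → ℕ} {C : Type} (S : Struc R ρ C)
    {n : ℕ} (f : Fin n → C) (φ : QF R ρ C n) :
    S.Sat (fun i : Fin 0 => i.elim0) (φ.subst f) ↔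
      S.Sat (fun i => S.const (f i)) φ := by
  induction φ with
  | tru => exact Iff.rfl
  | eq s t =>
      show S.val _ _ = S.val _ _ ↔ _
      rw [val_substTerm, val_substTerm]; exact Iff.rfl
  | rel r args =>
      show S.rel r _ ↔ S.rel r _
      have : (fun i => S.val (fun i : Fin 0 => i.elim0) (substTerm f (args i)))
          = fun i => S.val (fun i => S.const (f i)) (args i) := by
        funext i; exact val_substTerm S f (args i)
      rw [this]
  | not φ ih => exact not_congr ih
  | and φ ψ ih₁ ih₂ => exact and_congr ih₁ ih₂

/-- Satisfaction of closed quantifier-free formulas is invariant under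
`MyRel`. -/
theorem sat_closed_iff {R : Type} {ρ : R → ℕ} {C : Type} {S T : Struc R ρ C}
    (h : MyRel R ρ C S T) (φ : QF R ρ C 0) :
    S.Sat (fun i : Fin 0 => i.elim0) φ ↔ T.Sat (fun i : Fin 0 => i.elim0) φ := by
  induction φ with
  | tru => exact Iff.rfl
  | eq s t =>
      rcases s with c | i; swap; · exact i.elim0
      rcases t with c' | i; swap; · exact i.elim0
      exact h.1 c c'
  | rel r args =>
      have hf : ∀ i, ∃ c : C, args i = Sum.inl c := by
        intro i
        rcases hh : args i with c | j
        · exact ⟨c, rfl⟩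
        · exact j.elim0
      choose g hg using hf
      show S.rel r _ ↔ T.rel r _
      have e1 : (fun i => S.val (fun i : Fin 0 => i.elim0) (args i))
          = fun i => S.const (g i) := by funext i; rw [hg i]; rfl
      have e2 : (fun i => T.val (fun i : Fin 0 => i.elim0) (args i))
          = fun i => T.const (g i) := by funext i; rw [hg i]; rfl
      rw [e1, e2]; exact h.2 r g
  | not φ ih => exact not_congr ih
  | and φ ψ ih₁ ih₂ => exact and_congr ih₁ ih₂

theorem oplus_rel_inl_iff {R : Type} {ρ : R → ℕ} {C : Type} {R' : Type}
    {ρ' : R' → ℕ} {C' : Type} (S : Struc R ρ C) (S' : Struc R' ρ' C')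
    (r : R) (args : Fin (ρ r) → C ⊕ C') :
    ((S.oplus S').rel (Sum.inl r) (fun i => (S.oplus S').const (args i))) ↔
      ∃ g : Fin (ρ r) → C, (∀ i, args i = Sum.inl (g i)) ∧
        S.rel r (fun i => S.const (g i)) := by
  show (∃ a : Fin (ρ r) → S.dom,
      (∀ i, (S.oplus S').const (args i) = Sum.inl (a i)) ∧ S.rel r a) ↔ _
  constructor
  · rintro ⟨a, h1, h2⟩
    have hf : ∀ i, ∃ c : C, args i = Sum.inl c ∧ a i = S.const c := by
      intro i
      rcases hh : args i with c | c'
      · refine ⟨c, rfl, ?_⟩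
        have := h1 i
        rw [hh] at this
        exact (Sum.inl.injEq _ _ ▸ this).symm
      · have := h1 i
        rw [hh] at this
        exact absurd this (by simp [Struc.oplus])
    choose g hg1 hg2 using hf
    refine ⟨g, hg1, ?_⟩
    have : a = fun i => S.const (g i) := funext hg2
    rwa [← this]
  · rintro ⟨g, hg, h2⟩
    exact ⟨fun i => S.const (g i), fun i => by rw [hg i]; rfl, h2⟩

theorem oplus_rel_inr_iff {R : Type} {ρ : R → ℕ} {C : Type} {R' : Type}
    {ρ' : R' → ℕ} {C' : Type} (S : Struc R ρ C) (S' : Struc R' ρ' C')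
    (r : R') (args : Fin (ρ' r) → C ⊕ C') :
    ((S.oplus S').rel (Sum.inr r) (fun i => (S.oplus S').const (args i))) ↔
      ∃ g : Fin (ρ' r) → C', (∀ i, args i = Sum.inr (g i)) ∧
        S'.rel r (fun i => S'.const (g i)) := by
  show (∃ a : Fin (ρ' r) → S'.dom,
      (∀ i, (S.oplus S').const (args i) = Sum.inr (a i)) ∧ S'.rel r a) ↔ _
  constructor
  · rintro ⟨a, h1, h2⟩
    have hf : ∀ i, ∃ c : C', args i = Sum.inr c ∧ a i = S'.const c := by
      intro i
      rcases hh : args i with c | c'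
      · have := h1 i
        rw [hh] at this
        exact absurd this (by simp [Struc.oplus])
      · refine ⟨c', rfl, ?_⟩
        have := h1 i
        rw [hh] at this
        exact (Sum.inr.injEq _ _ ▸ this).symm
    choose g hg1 hg2 using hf
    refine ⟨g, hg1, ?_⟩
    have : a = fun i => S'.const (g i) := funext hg2
    rwa [← this]
  · rintro ⟨g, hg, h2⟩
    exact ⟨fun i => S'.const (g i), fun i => by rw [hg i]; rfl, h2⟩

theorem myRel_oplus {R : Type} {ρ : R → ℕ} {C : Type} {R' : Type}
    {ρ' : R' → ℕ} {C' : Type} {S₁ S₂ : Struc R ρ C} {S₁' S₂' : Struc R' ρ' C'}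
    (h : MyRel R ρ C S₁ S₂) (h' : MyRel R' ρ' C' S₁' S₂') :
    MyRel (R ⊕ R') (Sum.elim ρ ρ') (C ⊕ C') (S₁.oplus S₁') (S₂.oplus S₂') := by
  constructor
  · rintro (c | c) (c' | c')
    · simpa only [Struc.oplus, Sum.elim_inl, Sum.inl.injEq] using h.1 c c'
    · simp [Struc.oplus]
    · simp [Struc.oplus]
    · simpa only [Struc.oplus, Sum.elim_inr, Sum.inr.injEq] using h'.1 c c'
  · rintro (r | r) args
    · refine (oplus_rel_inl_iff S₁ S₁' r args).trans (Iff.trans ?_ (oplus_rel_inl_iff S₂ S₂' r args).symm)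
      exact exists_congr fun g => and_congr_right fun _ => h.2 r g
    · refine (oplus_rel_inr_iff S₁ S₁' r args).trans (Iff.trans ?_ (oplus_rel_inr_iff S₂ S₂' r args).symm)
      exact exists_congr fun g => and_congr_right fun _ => h'.2 r g

theorem myRel_apply {R : Type} {ρ : R → ℕ} {C : Type} {R' : Type}
    {ρ' : R' → ℕ} {C' : Type} (D : Scheme R ρ C R' ρ' C') (hD : D.IsValid)
    {S T : Struc R ρ C} (h : MyRel R ρ C S T) :
    MyRel R' ρ' C' (D.apply hD S) (D.apply hD T) := by
  set cS : C' → C := fun d => Classical.choose (hD.total S d) with hcS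
  set cT : C' → C := fun d => Classical.choose (hD.total T d) with hcT
  have hSspec : ∀ d, S.Sat (fun i : Fin 0 => i.elim0) (D.κ (cS d) d) :=
    fun d => Classical.choose_spec (hD.total S d)
  have hTspec : ∀ d, T.Sat (fun i : Fin 0 => i.elim0) (D.κ (cT d) d) :=
    fun d => Classical.choose_spec (hD.total T d)
  have hST : ∀ d, T.Sat (fun i : Fin 0 => i.elim0) (D.κ (cS d) d) :=
    fun d => (sat_closed_iff h (D.κ (cS d) d)).mp (hSspec d)
  have hkey : ∀ d, T.const (cS d) = T.const (cT d) :=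
    fun d => hD.uniq T (cS d) (cT d) d (hST d) (hTspec d)
  constructor
  · intro d d'
    show (⟨S.const (cS d), _⟩ : {x // _}) = ⟨S.const (cS d'), _⟩ ↔
      (⟨T.const (cT d), _⟩ : {x // _}) = ⟨T.const (cT d'), _⟩
    rw [Subtype.mk.injEq, Subtype.mk.injEq, ← hkey d, ← hkey d']
    exact h.1 (cS d) (cS d')
  · intro r' args
    show S.Sat (fun i => S.const (cS (args i))) (D.frm r') ↔
      T.Sat (fun i => T.const (cT (args i))) (D.frm r')
    have e : (fun i => T.const (cT (args i)))
        = fun i => T.const (cS (args i)) := by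
      funext i; exact (hkey (args i)).symm
    rw [e, ← sat_subst S (fun i => cS (args i)) (D.frm r'),
      ← sat_subst T (fun i => cS (args i)) (D.frm r')]
    exact sat_closed_iff h _

/-- The invariant data determining a `MyRel`-class. -/
def relData {R : Type} {ρ : R → ℕ} {C : Type} (S : Struc R ρ C) :
    (C → C → Prop) × (∀ r : R, (Fin (ρ r) → C) → Prop) :=
  ⟨fun c c' => S.const c = S.const c',
   fun r args => S.rel r fun i => S.const (args i)⟩

theorem myRel_finite (R : Type) (ρ : R → ℕ) (C : Type)
    [Finite R] [Finite C] : Finite (Quot (MyRel R ρ C)) := by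
  have : ∀ (S T : Struc R ρ C), MyRel R ρ C S T → relData S = relData T := by
    intro S T h
    refine Prod.ext ?_ ?_
    · funext c c'; exact propext (h.1 c c')
    · funext r args; exact propext (h.2 r args)
  refine Finite.of_injective (Quot.lift relData this) ?_
  intro x y
  induction x using Quot.ind with | _ S =>
  induction y using Quot.ind with | _ T =>
  intro he
  apply Quot.sound
  constructor
  · intro c c'
    exact iff_of_eq (congrFun (congrFun (congrArg Prod.fst he) c) c')
  · intro r args
    exact iff_of_eq (congrFun (congrFun (congrArg Prod.snd he) r) args)

/-- For each sort `(R₀, C₀)` (with `R₀`, `C₀` finite), the set of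
source-separated structures — those in which distinct constants denote
distinct elements — is recognizable with respect to the signature consisting
of disjoint union and all quantifier-free definable operations: it is
saturated by an equivalence relation which is compatible with `⊕` and with
all qfd operations and has finite index on every finite sort. -/
theorem source_separated_recognizable
    (R₀ : Type) (ρ₀ : R₀ → ℕ) (C₀ : Type) [Finite R₀] [Finite C₀] :
    ∃ rel : ∀ (R : Type) (ρ : R → ℕ) (C : Type),
        Struc R ρ C → Struc R ρ C → Prop,
      (∀ (R : Type) (ρ : R → ℕ) (C : Type), Equivalence (rel R ρ C)) ∧
      (∀ (R : Type) (ρ : R → ℕ) (C : Type) (R' : Type) (ρ' : R' → ℕ) (C' : Type)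
          (S₁ S₂ : Struc R ρ C) (S₁' S₂' : Struc R' ρ' C'),
          rel R ρ C S₁ S₂ → rel R' ρ' C' S₁' S₂' →
          rel (R ⊕ R') (Sum.elim ρ ρ') (C ⊕ C') (S₁.oplus S₁') (S₂.oplus S₂')) ∧
      (∀ (R : Type) (ρ : R → ℕ) (C : Type) (R' : Type) (ρ' : R' → ℕ) (C' : Type)
          (D : Scheme R ρ C R' ρ' C') (hD : D.IsValid) (S T : Struc R ρ C),
          rel R ρ C S T → rel R' ρ' C' (D.apply hD S) (D.apply hD T)) ∧
      (∀ (R : Type) (ρ : R → ℕ) (C : Type), Finite R → Finite C →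
          Finite (Quot (rel R ρ C))) ∧
      (∀ S T : Struc R₀ ρ₀ C₀, rel R₀ ρ₀ C₀ S T →
          (Function.Injective S.const ↔ Function.Injective T.const)) := by
  refine ⟨MyRel, myRel_equiv, ?_, ?_, ?_, ?_⟩
  · intro R ρ C R' ρ' C' S₁ S₂ S₁' S₂' h h'
    exact myRel_oplus h h'
  · intro R ρ C R' ρ' C' D hD S T h
    exact myRel_apply D hD h
  · intro R ρ C _ _
    exact myRel_finite R ρ C
  · intro S T h
    constructor
    · intro hS c c' hT
      exact hS ((h.1 c c').mpr hT)
    · intro hT c c' hS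
      exact hT ((h.1 c c').mp hS)
end

section
/- For every integer p there exists an integer n such that every directed graph containing an 'undirected K_{n,n}' (two disjoint n-element vertex sets U, W with, for every pair (u,w) in U×W, at least one edge between u and w in some direction) contains the directed complete bipartite graph K⃗_{p,p} as a subgraph. In fact n = p·2^{2p} suffices. -/
/-- A directed graph contains the directed complete bipartite graph K⃗_{p,p}
as a subgraph. -/
def ContainsDirBip {V : Type*} (adj : V → V → Prop) (p : ℕ) : Prop :=
  ∃ f g : Fin p → V,
    Function.Injective f ∧ Function.Injective g ∧
    (∀ i j, f i ≠ g j) ∧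
    ∀ i j, adj (f i) (g j)

/-- Extract `p` injective indices from a finset of size at least `p`. -/
lemma exists_inj_into_finset {α : Type*} [LinearOrder α] {p : ℕ} (s : Finset α)
    (h : p ≤ s.card) : ∃ u : Fin p → α, Function.Injective u ∧ ∀ i, u i ∈ s := by
  obtain ⟨t, hts, htc⟩ := Finset.exists_subset_card_eq h
  refine ⟨fun i => (t.orderIsoOfFin htc i : α), ?_, fun i => hts (t.orderIsoOfFin htc i).2⟩
  intro a b hab
  exact (t.orderIsoOfFin htc).injective (Subtype.ext hab)

/-- For every p, with n = p·2^{2p}, every directed graph containing an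
"undirected K_{n,n}" (two disjoint injective n-families with, for every pair,
at least one edge in some direction) contains K⃗_{p,p} as a subgraph. -/
theorem dirBip_of_undirBip (p : ℕ) (V : Type*) (adj : V → V → Prop)
    (h : ∃ f g : Fin (p * 2 ^ (2 * p)) → V,
      Function.Injective f ∧ Function.Injective g ∧
      (∀ i j, f i ≠ g j) ∧
      ∀ i j, adj (f i) (g j) ∨ adj (g j) (f i)) :
    ContainsDirBip adj p := by
  classical
  obtain ⟨F, G, hF, hG, hFG, hadj⟩ := h
  rcases Nat.eq_zero_or_pos p with hp | hp
  · subst hp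
    exact ⟨Fin.elim0, Fin.elim0, fun i => i.elim0, fun i => i.elim0,
      fun i => i.elim0, fun i => i.elim0⟩
  have h2p : 2 * p ≤ p * 2 ^ (2 * p) := by
    have h2 : 2 ≤ 2 ^ (2 * p) := by
      calc 2 = 2 ^ 1 := rfl
      _ ≤ 2 ^ (2 * p) := Nat.pow_le_pow_right (by norm_num) (by omega)
    calc 2 * p = p * 2 := by ring
    _ ≤ p * 2 ^ (2 * p) := Nat.mul_le_mul_left p h2
  -- embed Fin (2*p) into Fin n
  let e : Fin (2 * p) → Fin (p * 2 ^ (2 * p)) := fun w => ⟨w, lt_of_lt_of_le w.2 h2p⟩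
  have he : Function.Injective e := by
    intro a b hab
    have : (e a).val = (e b).val := congrArg Fin.val hab
    exact Fin.ext this
  -- coloring
  let c : Fin (p * 2 ^ (2 * p)) → (Fin (2 * p) → Bool) := fun u w =>
    if adj (F u) (G (e w)) then true else false
  -- pigeonhole: some color class has ≥ p elements
  have hcard : Fintype.card (Fin (2 * p) → Bool) * p ≤ Fintype.card (Fin (p * 2 ^ (2 * p))) := by
    simp only [Fintype.card_fun, Fintype.card_fin, Fintype.card_bool]
    rw [Nat.mul_comm]
  obtain ⟨c₀, hc₀⟩ := Fintype.exists_le_card_fiber_of_mul_le_card (f := c) hcard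
  obtain ⟨u, hu, hum⟩ := exists_inj_into_finset _ hc₀
  have hcu : ∀ i, c (u i) = c₀ := by
    intro i
    have := hum i
    simpa using this
  -- pigeonhole on Bool within c₀
  have hsplit : (Finset.univ.filter (fun w => c₀ w = true)).card +
      (Finset.univ.filter (fun w => ¬ c₀ w = true)).card = 2 * p := by
    rw [Finset.card_filter_add_card_filter_not]
    simp
  have hdisj : p ≤ (Finset.univ.filter (fun w => c₀ w = true)).card ∨
      p ≤ (Finset.univ.filter (fun w => ¬ c₀ w = true)).card := by omega
  rcases hdisj with hb | hb
  · obtain ⟨w, hw, hwm⟩ := exists_inj_into_finset _ hb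
    have hcw : ∀ j, c₀ (w j) = true := by
      intro j; have := hwm j; simpa using this
    refine ⟨fun i => F (u i), fun j => G (e (w j)), ?_, ?_, ?_, ?_⟩
    · exact fun a b hab => hu (hF hab)
    · exact fun a b hab => hw (he (hG hab))
    · exact fun i j => hFG (u i) (e (w j))
    · intro i j
      have h1 : c (u i) (w j) = true := by rw [hcu i]; exact hcw j
      by_contra hA
      simp only [c, if_neg hA] at h1
      exact Bool.false_ne_true h1
  · obtain ⟨w, hw, hwm⟩ := exists_inj_into_finset _ hb
    have hcw : ∀ j, c₀ (w j) = false := by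
      intro j; have := hwm j; simpa using this
    refine ⟨fun i => G (e (w i)), fun j => F (u j), ?_, ?_, ?_, ?_⟩
    · exact fun a b hab => hw (he (hG hab))
    · exact fun a b hab => hu (hF hab)
    · exact fun i j => (hFG (u j) (e (w i))).symm
    · intro i j
      have h1 : c (u j) (w i) = false := by rw [hcu j]; exact hcw i
      by_cases hA : adj (F (u j)) (G (e (w i)))
      · simp only [c, if_pos hA] at h1
        exact absurd h1 (by simp)
      · exact (hadj (u j) (e (w i))).resolve_left hA
end
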